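/- arXiv:1609.06760 — 3 statements merged into one kernel-verified Lean document; each statement's English description precedes it below -/
import Mathlib

section
/- Let λ and μ be Young diagrams. Then λ and μ are domino-equivalent (i.e., they have the same 2-core) if and only if γ(λ) = γ(μ), that is, if and only if the number of cells with even content minus the number of cells with odd content is the same for λ and for μ. -/
namespace PeriplecticPaper

/-- The content of a cell `(i, j)` (row `i`, column `j`) is `j - i`. -/
def content (c : ℕ × ℕ) : ℤ := (c.2 : ℤ) - (c.1 : ℤ)

/-- `gamma μ` is the number of cells of `μ` with even content minus the number of
cells of `μ` with odd content. -/
def gamma (μ : YoungDiagram) : ℤ :=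
  ((μ.cells.filter fun c => Even (content c)).card : ℤ) -
    ((μ.cells.filter fun c => ¬ Even (content c)).card : ℤ)

/-- `AddDomino μ lam` means the Young diagram `lam` is obtained from `μ` by adding a
domino: `μ ⊆ lam` and `lam \ μ` consists of exactly two cells, which are of the form
`(i, j), (i, j+1)` or of the form `(i, j), (i+1, j)`. -/
def AddDomino (μ lam : YoungDiagram) : Prop :=
  μ.cells ⊆ lam.cells ∧
    ∃ i j : ℕ,
      lam.cells \ μ.cells = {(i, j), (i, j + 1)} ∨
      lam.cells \ μ.cells = {(i, j), (i + 1, j)}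

/-- Two Young diagrams are domino-equivalent (have the same 2-core) if they are related
by the equivalence relation generated by adding a domino. -/
def DominoEquiv : YoungDiagram → YoungDiagram → Prop :=
  Relation.EqvGen AddDomino

/-- The staircase Young diagram `∂^m`, with cells `{(i, j) : i + j ≤ m - 1}`,
i.e. with row lengths `(m, m-1, …, 1)`. -/
def staircase (m : ℕ) : YoungDiagram where
  cells := (Finset.range m ×ˢ Finset.range m).filter fun c => c.1 + c.2 < m
  isLowerSet := by
    intro c1 c2 h hc2
    simp only [Finset.coe_filter, Set.mem_setOf_eq, Finset.mem_product,
      Finset.mem_range] at hc2 ⊢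
    have h1 := h.1
    have h2 := h.2
    omega

/-! ### Auxiliary material -/

/-- `gamma` rewritten as a signed sum over the cells. -/
def gamma' (μ : YoungDiagram) : ℤ := ∑ c ∈ μ.cells, (-1 : ℤ) ^ (c.1 + c.2)

lemma even_content_iff (c : ℕ × ℕ) : Even (content c) ↔ Even (c.1 + c.2) := by
  unfold content
  rw [Int.even_sub, Nat.even_add]
  simp [Int.even_coe_nat]
  tauto

lemma gamma_eq_gamma' (μ : YoungDiagram) : gamma μ = gamma' μ := by
  unfold gamma gamma'
  rw [← Finset.sum_filter_add_sum_filter_not μ.cells (fun c => Even (content c))]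
  have h1 : ∑ c ∈ μ.cells.filter (fun c => Even (content c)), (-1 : ℤ) ^ (c.1 + c.2)
      = ∑ _c ∈ μ.cells.filter (fun c => Even (content c)), (1 : ℤ) := by
    refine Finset.sum_congr rfl fun c hc => ?_
    simp only [Finset.mem_filter] at hc
    rw [even_content_iff] at hc
    exact Even.neg_one_pow hc.2
  have h2 : ∑ c ∈ μ.cells.filter (fun c => ¬ Even (content c)), (-1 : ℤ) ^ (c.1 + c.2)
      = ∑ _c ∈ μ.cells.filter (fun c => ¬ Even (content c)), (-1 : ℤ) := by
    refine Finset.sum_congr rfl fun c hc => ?_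
    simp only [Finset.mem_filter] at hc
    rw [even_content_iff] at hc
    exact Odd.neg_one_pow (Nat.not_even_iff_odd.1 hc.2)
  rw [h1, h2, Finset.sum_const, Finset.sum_const]
  ring

lemma gamma'_addDomino {μ lam : YoungDiagram} (h : AddDomino μ lam) :
    gamma' lam = gamma' μ := by
  obtain ⟨hsub, i, j, hd | hd⟩ := h <;>
  · have hunion : lam.cells = μ.cells ∪ (lam.cells \ μ.cells) := by
      rw [Finset.union_sdiff_of_subset hsub]
    have hdisj : Disjoint μ.cells (lam.cells \ μ.cells) := Finset.disjoint_sdiff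
    unfold gamma'
    rw [hunion, Finset.sum_union hdisj, hd, Finset.sum_pair (by simp)]
    simp only []
    simp only [show i+1+j = i+j+1 by ring, show i + (j+1) = i+j+1 by ring, pow_succ]
    ring

lemma mem_staircase {m i j : ℕ} : (i, j) ∈ staircase m ↔ i + j < m := by
  show (i, j) ∈ (staircase m).cells ↔ _
  simp only [staircase, Finset.mem_filter, Finset.mem_product, Finset.mem_range]
  exact ⟨fun h => h.2, fun h => ⟨⟨by omega, by omega⟩, h⟩⟩

/-- The alternating sum `1 - 1 + 1 - ⋯` with `k` terms. -/
def S (k : ℕ) : ℤ := ∑ j ∈ Finset.range k, (-1 : ℤ) ^ j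

lemma S_eq (k : ℕ) : S k = if Even k then 0 else 1 := by
  induction k with
  | zero => simp [S]
  | succ n ih =>
    rw [S, Finset.sum_range_succ, ← S, ih]
    rcases Nat.even_or_odd n with h | h
    · simp [h, Even.neg_one_pow h, Nat.even_add_one]
    · simp [Nat.not_even_iff_odd.2 h, Odd.neg_one_pow h, Nat.even_add_one]

/-- An expression equal to `gamma' (staircase m)`. -/
def T (m : ℕ) : ℤ := ∑ i ∈ Finset.range m, (-1 : ℤ) ^ i * S (m - i)

/-- A closed form for `gamma' (staircase m)`. -/
def g (m : ℕ) : ℤ := if Even m then -((m / 2 : ℕ) : ℤ) else ((m / 2 : ℕ) : ℤ) + 1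

lemma T_succ (m : ℕ) : T (m + 1) = -T m + S (m + 1) := by
  rw [T, Finset.sum_range_succ']
  simp only [Nat.add_sub_cancel_left, pow_succ, Nat.succ_sub_succ]
  rw [show (m + 1 - 0) = m + 1 by omega]
  rw [pow_zero, one_mul, T, ← Finset.sum_neg_distrib]
  congr 1
  refine Finset.sum_congr rfl fun i hi => ?_
  ring

lemma T_eq (m : ℕ) : T m = g m := by
  induction m with
  | zero => simp [T, g]
  | succ n ih =>
    rw [T_succ, ih, S_eq, g, g]
    rcases Nat.even_or_odd n with h | h
    · have h2 := Nat.even_iff.1 h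
      simp only [h, if_true, Nat.even_add_one, h, not_true, if_false]
      have : (n + 1) / 2 = n / 2 := by omega
      rw [this]; ring
    · have h2 := Nat.odd_iff.1 h
      have hne : ¬ Even n := Nat.not_even_iff_odd.2 h
      simp only [hne, if_false, Nat.even_add_one, hne, not_false_iff, if_true]
      have : (n + 1) / 2 = n / 2 + 1 := by omega
      rw [this]; push_cast; ring

lemma gamma'_staircase (m : ℕ) : gamma' (staircase m) = g m := by
  rw [← T_eq]
  unfold gamma'
  show ∑ c ∈ (Finset.range m ×ˢ Finset.range m).filter (fun c => c.1 + c.2 < m),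
      (-1 : ℤ) ^ (c.1 + c.2) = T m
  rw [Finset.sum_filter, Finset.sum_product, T]
  refine Finset.sum_congr rfl fun i hi => ?_
  rw [Finset.mem_range] at hi
  have hfil : (Finset.range m).filter (fun j => i + j < m) = Finset.range (m - i) := by
    ext j; simp only [Finset.mem_filter, Finset.mem_range]; omega
  rw [← Finset.sum_filter, hfil, S, Finset.mul_sum]
  refine Finset.sum_congr rfl fun j hj => ?_
  rw [← pow_add]

lemma g_inj {m n : ℕ} (h : g m = g n) : m = n := by
  unfold g at h
  rcases Nat.even_or_odd m with hm | hm <;> rcases Nat.even_or_odd n with hn | hn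
  · simp only [hm, hn, if_true] at h
    have := Nat.even_iff.1 hm; have := Nat.even_iff.1 hn; omega
  · simp only [hm, Nat.not_even_iff_odd.2 hn, if_true, if_false] at h; omega
  · simp only [hn, Nat.not_even_iff_odd.2 hm, if_true, if_false] at h; omega
  · simp only [Nat.not_even_iff_odd.2 hm, Nat.not_even_iff_odd.2 hn, if_false] at h
    have := Nat.odd_iff.1 hm; have := Nat.odd_iff.1 hn; omega

lemma addDomino_of_erase (lam : YoungDiagram) (a b : ℕ × ℕ)
    (ha : a ∈ lam.cells) (hb : b ∈ lam.cells) (hab : a ≠ b)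
    (hls : IsLowerSet (((lam.cells.erase a).erase b : Finset (ℕ × ℕ)) : Set (ℕ × ℕ)))
    (hform : ∃ i j : ℕ, ((a, b) = ((i, j), (i, j+1)) ∨ (a, b) = ((i, j), (i+1, j)))) :
    ∃ μ : YoungDiagram, AddDomino μ lam ∧ μ.cells.card + 2 = lam.cells.card := by
  refine ⟨⟨(lam.cells.erase a).erase b, hls⟩, ⟨?_, ?_⟩, ?_⟩
  · intro c hc
    simp only [Finset.mem_erase] at hc
    exact hc.2.2
  · have key : lam.cells \ (lam.cells.erase a).erase b = {a, b} := by
      ext c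
      simp only [Finset.mem_sdiff, Finset.mem_erase, Finset.mem_insert, Finset.mem_singleton]
      constructor
      · rintro ⟨hc, h⟩
        by_contra hcon
        push_neg at hcon
        exact h ⟨hcon.2, hcon.1, hc⟩
      · rintro (rfl | rfl)
        · exact ⟨ha, fun h => h.2.1 rfl⟩
        · exact ⟨hb, fun h => h.1 rfl⟩
    obtain ⟨i, j, hf | hf⟩ := hform
    · injection hf with h1 h2; subst h1; subst h2
      exact ⟨i, j, Or.inl key⟩
    · injection hf with h1 h2; subst h1; subst h2
      exact ⟨i, j, Or.inr key⟩
  · have hb' : b ∈ lam.cells.erase a := Finset.mem_erase.2 ⟨fun h => hab h.symm, hb⟩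
    rw [Finset.card_erase_of_mem hb', Finset.card_erase_of_mem ha]
    have : 2 ≤ lam.cells.card := by
      have := Finset.one_lt_card.2 ⟨a, ha, b, hb, hab⟩; omega
    omega

lemma dichotomy (lam : YoungDiagram) :
    (∃ m, lam = staircase m) ∨
    ∃ μ : YoungDiagram, AddDomino μ lam ∧ μ.cells.card + 2 = lam.cells.card := by
  by_cases hH : ∃ i, lam.rowLen (i + 1) + 2 ≤ lam.rowLen i
  · -- horizontal domino removal at end of row `i`
    obtain ⟨i, hi⟩ := hH
    right
    set k := lam.rowLen i - 2 with hk
    have hrk : lam.rowLen i = k + 2 := by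
      have := lam.rowLen_anti i (i + 1) (by omega); omega
    have ha : (i, k) ∈ lam.cells := by
      rw [YoungDiagram.mem_cells, YoungDiagram.mem_iff_lt_rowLen]; omega
    have hb : (i, k + 1) ∈ lam.cells := by
      rw [YoungDiagram.mem_cells, YoungDiagram.mem_iff_lt_rowLen]; omega
    refine addDomino_of_erase lam (i, k) (i, k + 1) ha hb (by simp) ?_ ⟨i, k, Or.inl rfl⟩
    rintro ⟨xi, xj⟩ ⟨yi, yj⟩ ⟨(hy1 : yi ≤ xi), (hy2 : yj ≤ xj)⟩ hx
    simp only [Finset.coe_erase, Set.mem_diff, Finset.mem_coe, Set.mem_singleton_iff] at hx ⊢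
    obtain ⟨⟨hxl, hxa⟩, hxb⟩ := hx
    have hxl' : xj < lam.rowLen xi := YoungDiagram.mem_iff_lt_rowLen.1 hxl
    have hyl : (yi, yj) ∈ lam.cells :=
      lam.isLowerSet (Prod.mk_le_mk.2 ⟨hy1, hy2⟩) hxl
    refine ⟨⟨hyl, fun hy => ?_⟩, fun hy => ?_⟩ <;>
    · injection hy with e1 e2
      by_cases hcase : xi = i
      · have hrow : xj < k + 2 := by rw [hcase] at hxl'; omega
        have hxj : xj = k ∨ xj = k + 1 := by omega
        rcases hxj with rfl | rfl
        · exact hxa (by rw [hcase])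
        · exact hxb (by rw [hcase])
      · have h1 : lam.rowLen xi ≤ lam.rowLen (i + 1) := lam.rowLen_anti _ _ (by omega)
        omega
  · push_neg at hH
    by_cases hV : ∃ i, 0 < lam.rowLen i ∧ lam.rowLen (i + 1) = lam.rowLen i
    · -- vertical domino removal
      right
      obtain ⟨i0, hi0pos, hi0eq⟩ := hV
      set v := lam.rowLen i0 with hv
      have hex : ∃ n, lam.rowLen n < v := by
        obtain ⟨n, hn⟩ := lam.exists_notMem_col 0
        refine ⟨n, ?_⟩
        have : ¬ (0 < lam.rowLen n) := fun h => hn (YoungDiagram.mem_iff_lt_rowLen.2 h)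
        omega
      set n := Nat.find hex with hn
      have hnlt : lam.rowLen n < v := Nat.find_spec hex
      have hmin : ∀ m, m < n → v ≤ lam.rowLen m := fun m hm => by
        have := Nat.find_min hex hm; omega
      have hn2 : i0 + 2 ≤ n := by
        by_contra hcon
        have h1 : lam.rowLen (i0 + 1) ≤ lam.rowLen n := lam.rowLen_anti n (i0 + 1) (by omega)
        omega
      set i := n - 2 with hidef
      have hri : lam.rowLen i = v := by
        have h1 : v ≤ lam.rowLen i := hmin i (by omega)
        have h2 : lam.rowLen i ≤ lam.rowLen i0 := lam.rowLen_anti i0 i (by omega)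
        omega
      have hri1 : lam.rowLen (i + 1) = v := by
        have h1 : v ≤ lam.rowLen (i + 1) := hmin (i + 1) (by omega)
        have h2 : lam.rowLen (i + 1) ≤ lam.rowLen i0 := lam.rowLen_anti i0 (i + 1) (by omega)
        omega
      have hri2 : lam.rowLen (i + 2) < v := by
        have : i + 2 = n := by omega
        rw [this]; exact hnlt
      have hvpos : 0 < v := hi0pos
      have ha : (i, v - 1) ∈ lam.cells := by
        rw [YoungDiagram.mem_cells, YoungDiagram.mem_iff_lt_rowLen]; omega
      have hb : (i + 1, v - 1) ∈ lam.cells := by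
        rw [YoungDiagram.mem_cells, YoungDiagram.mem_iff_lt_rowLen]; omega
      refine addDomino_of_erase lam (i, v - 1) (i + 1, v - 1) ha hb (by simp) ?_
        ⟨i, v - 1, Or.inr rfl⟩
      rintro ⟨xi, xj⟩ ⟨yi, yj⟩ ⟨(hy1 : yi ≤ xi), (hy2 : yj ≤ xj)⟩ hx
      simp only [Finset.coe_erase, Set.mem_diff, Finset.mem_coe, Set.mem_singleton_iff] at hx ⊢
      obtain ⟨⟨hxl, hxa⟩, hxb⟩ := hx
      have hxl' : xj < lam.rowLen xi := YoungDiagram.mem_iff_lt_rowLen.1 hxl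
      have hyl : (yi, yj) ∈ lam.cells :=
        lam.isLowerSet (Prod.mk_le_mk.2 ⟨hy1, hy2⟩) hxl
      refine ⟨⟨hyl, fun hy => ?_⟩, fun hy => ?_⟩ <;>
      · injection hy with e1 e2
        by_cases hcase : xi = i
        · have hrow : xj < v := by rw [hcase] at hxl'; omega
          have hxj : xj = v - 1 := by omega
          exact hxa (by rw [hcase, hxj])
        · by_cases hcase2 : xi = i + 1
          · have hrow : xj < v := by rw [hcase2] at hxl'; omega
            have hxj : xj = v - 1 := by omega
            exact hxb (by rw [hcase2, hxj])
          · have h1 : lam.rowLen xi ≤ lam.rowLen (i + 2) :=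
              lam.rowLen_anti _ _ (by omega)
            omega
    · -- no removable domino: `lam` is a staircase
      left
      push_neg at hV
      refine ⟨lam.rowLen 0, ?_⟩
      have hstep : ∀ i, 0 < lam.rowLen i → lam.rowLen (i + 1) + 1 = lam.rowLen i := by
        intro i hpos
        have h1 := hH i
        have h2 := hV i hpos
        have h3 : lam.rowLen (i + 1) ≤ lam.rowLen i := lam.rowLen_anti i (i + 1) (by omega)
        omega
      have hall : ∀ i, lam.rowLen i = lam.rowLen 0 - i := by
        intro i
        induction i with
        | zero => simp
        | succ m ih =>
          by_cases hpos : 0 < lam.rowLen m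
          · have := hstep m hpos; omega
          · have h3 : lam.rowLen (m + 1) ≤ lam.rowLen m := lam.rowLen_anti m (m + 1) (by omega)
            omega
      ext ⟨i, j⟩
      rw [YoungDiagram.mem_cells, YoungDiagram.mem_iff_lt_rowLen, hall i,
        YoungDiagram.mem_cells, mem_staircase]
      omega

lemma toStaircase : ∀ (n : ℕ) (lam : YoungDiagram), lam.cells.card ≤ n →
    ∃ m, DominoEquiv lam (staircase m) := by
  intro n
  induction n with
  | zero =>
    intro lam hcard
    rcases dichotomy lam with ⟨m, rfl⟩ | ⟨μ, _, hc⟩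
    · exact ⟨m, Relation.EqvGen.refl _⟩
    · omega
  | succ n ih =>
    intro lam hcard
    rcases dichotomy lam with ⟨m, rfl⟩ | ⟨μ, hdom, hc⟩
    · exact ⟨m, Relation.EqvGen.refl _⟩
    · obtain ⟨m, hm⟩ := ih μ (by omega)
      exact ⟨m, Relation.EqvGen.trans _ _ _
        (Relation.EqvGen.symm _ _ (Relation.EqvGen.rel _ _ hdom)) hm⟩

lemma gamma_of_dominoEquiv {lam mu : YoungDiagram} (h : DominoEquiv lam mu) :
    gamma lam = gamma mu := by
  induction h with
  | rel x y hxy => rw [gamma_eq_gamma', gamma_eq_gamma', gamma'_addDomino hxy]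
  | refl x => rfl
  | symm x y _ ih => exact ih.symm
  | trans x y z _ _ ih1 ih2 => exact ih1.trans ih2

/-- Two Young diagrams are domino-equivalent (i.e. have the same 2-core) if and only
if they have the same number of cells with even content minus cells with odd content. -/
theorem statement0 (lam mu : YoungDiagram) :
    DominoEquiv lam mu ↔ gamma lam = gamma mu := by
  constructor
  · exact gamma_of_dominoEquiv
  · intro h
    obtain ⟨m, hm⟩ := toStaircase lam.cells.card lam le_rfl
    obtain ⟨n, hn⟩ := toStaircase mu.cells.card mu le_rfl
    have h1 : gamma lam = gamma (staircase m) := gamma_of_dominoEquiv hm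
    have h2 : gamma mu = gamma (staircase n) := gamma_of_dominoEquiv hn
    have hg : g m = g n := by
      rw [← gamma'_staircase, ← gamma'_staircase, ← gamma_eq_gamma', ← gamma_eq_gamma',
        ← h1, ← h2, h]
    have : m = n := g_inj hg
    subst this
    exact Relation.EqvGen.trans _ _ _ hm (Relation.EqvGen.symm _ _ hn)

end PeriplecticPaper
end

section
/- Let k be a field with char k ≠ 2. The periplectic Brauer algebra A₂ over k is hereditary: every left ideal of A₂, regarded as a left A₂-module, is projective. -/
namespace PeriplecticPaper

/-- The two generators `s` and `ε` of the periplectic Brauer algebra `A₂`. -/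
inductive PBGen : Type
  | s
  | e

open FreeAlgebra

/-- The defining relations of the periplectic Brauer algebra `A₂`:
`s² = 1`, `ε² = 0`, `s·ε = ε` and `ε·s = -ε`.  Taking the ring quotient by this
relation is the quotient of the free algebra on `s, ε` by the two-sided ideal
generated by `s² - 1`, `ε²`, `s·ε - ε` and `ε·s + ε`. -/
inductive A2Rel (k : Type) [Field k] :
    FreeAlgebra k PBGen → FreeAlgebra k PBGen → Prop
  | ss : A2Rel k (ι k PBGen.s * ι k PBGen.s) 1
  | ee : A2Rel k (ι k PBGen.e * ι k PBGen.e) 0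
  | se : A2Rel k (ι k PBGen.s * ι k PBGen.e) (ι k PBGen.e)
  | es : A2Rel k (ι k PBGen.e * ι k PBGen.s) (-(ι k PBGen.e))

/-- The periplectic Brauer algebra `A₂` over the field `k`:  the quotient of the free
associative unital `k`-algebra on generators `s, ε` by the two-sided ideal generated by
`s² - 1`, `ε²`, `s·ε - ε` and `ε·s + ε`. -/
abbrev A2 (k : Type) [Field k] : Type := RingQuot (A2Rel k)

/-- The image in `A₂` of the generator `s`. -/
noncomputable def sBar (k : Type) [Field k] : A2 k :=
  RingQuot.mkAlgHom k (A2Rel k) (ι k PBGen.s)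

/-- The image in `A₂` of the generator `ε`. -/
noncomputable def eBar (k : Type) [Field k] : A2 k :=
  RingQuot.mkAlgHom k (A2Rel k) (ι k PBGen.e)

section Aux

variable (k : Type) [Field k]

lemma rel_ss : sBar k * sBar k = 1 := by
  have := RingQuot.mkAlgHom_rel k (A2Rel.ss (k := k))
  simpa [sBar, map_mul, map_one] using this

lemma rel_ee : eBar k * eBar k = 0 := by
  have := RingQuot.mkAlgHom_rel k (A2Rel.ee (k := k))
  simpa [eBar, map_mul, map_zero] using this

lemma rel_se : sBar k * eBar k = eBar k := by
  have := RingQuot.mkAlgHom_rel k (A2Rel.se (k := k))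
  simpa [sBar, eBar, map_mul] using this

lemma rel_es : eBar k * sBar k = -eBar k := by
  have := RingQuot.mkAlgHom_rel k (A2Rel.es (k := k))
  simpa [sBar, eBar, map_mul, map_neg] using this

/-- The idempotent `e₊ = (1+s)/2`. -/
noncomputable def ep : A2 k := (2:k)⁻¹ • (1 + sBar k)

/-- The idempotent `e₋ = 1 - e₊ = (1-s)/2`. -/
noncomputable def em : A2 k := 1 - ep k

lemma s_ep : sBar k * ep k = ep k := by
  rw [ep, mul_smul_comm, mul_add, mul_one, rel_ss, add_comm]

lemma e_ep : eBar k * ep k = 0 := by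
  rw [ep, mul_smul_comm, mul_add, mul_one, rel_es, add_neg_cancel, smul_zero]

lemma ep_s : ep k * sBar k = ep k := by
  rw [ep, smul_mul_assoc, add_mul, one_mul, rel_ss, add_comm]

variable (h2 : (2:k) ≠ 0)
include h2

lemma ep_ep : ep k * ep k = ep k := by
  have : ep k * ep k = (2:k)⁻¹ • ((1 + sBar k) * ep k) := by
    rw [ep, smul_mul_assoc]
  rw [this, add_mul, one_mul, s_ep, ← two_smul k (ep k), smul_smul,
    inv_mul_cancel₀ h2, one_smul]

lemma ep_e : ep k * eBar k = eBar k := by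
  rw [ep, smul_mul_assoc, add_mul, one_mul, rel_se, ← two_smul k (eBar k), smul_smul,
    inv_mul_cancel₀ h2, one_smul]

lemma ep_em : ep k * em k = 0 := by
  rw [em, mul_sub, mul_one, ep_ep k h2, sub_self]

lemma em_em : em k * em k = em k := by
  calc em k * em k = (1 - ep k) * em k := by rw [← em]
    _ = em k - ep k * em k := by rw [sub_mul, one_mul]
    _ = em k := by rw [ep_em k h2, sub_zero]

omit h2 in
lemma e_em : eBar k * em k = eBar k := by
  rw [em, mul_sub, mul_one, e_ep, sub_zero]

end Aux

section Chars

variable (k : Type) [Field k]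

/-- The character `χ : A₂ → k` with `s ↦ 1`, `ε ↦ 0`. -/
noncomputable def chi : A2 k →ₐ[k] k :=
  RingQuot.liftAlgHom k ⟨FreeAlgebra.lift k (fun g => match g with | .s => 1 | .e => 0),
    by rintro x y ⟨⟩ <;> simp⟩

/-- The character `ρ : A₂ → k` with `s ↦ -1`, `ε ↦ 0`. -/
noncomputable def rho : A2 k →ₐ[k] k :=
  RingQuot.liftAlgHom k ⟨FreeAlgebra.lift k (fun g => match g with | .s => -1 | .e => 0),
    by rintro x y ⟨⟩ <;> simp⟩

@[simp] lemma chi_s : chi k (sBar k) = 1 := by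
  simp [chi, sBar, RingQuot.liftAlgHom_mkAlgHom_apply]

@[simp] lemma chi_e : chi k (eBar k) = 0 := by
  simp [chi, eBar, RingQuot.liftAlgHom_mkAlgHom_apply]

@[simp] lemma rho_s : rho k (sBar k) = -1 := by
  simp [rho, sBar, RingQuot.liftAlgHom_mkAlgHom_apply]

@[simp] lemma rho_e : rho k (eBar k) = 0 := by
  simp [rho, eBar, RingQuot.liftAlgHom_mkAlgHom_apply]

/-- Key lemma: on elements fixed by `e₊`, every `a` acts by the scalar `χ a`. -/
lemma mul_of_ep_fixed (a x : A2 k) (hx : ep k * x = x) : a * x = chi k a • x := by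
  obtain ⟨w, rfl⟩ := RingQuot.mkAlgHom_surjective k (A2Rel k) a
  induction w using FreeAlgebra.induction with
  | grade0 r =>
      rw [AlgHom.commutes, AlgHom.commutes, Algebra.smul_def]
      simp
  | grade1 g =>
      cases g with
      | s =>
          show sBar k * x = chi k (sBar k) • x
          rw [chi_s, one_smul, ← hx, ← mul_assoc, s_ep, hx]
      | e =>
          show eBar k * x = chi k (eBar k) • x
          rw [chi_e, zero_smul, ← hx, ← mul_assoc, e_ep, zero_mul]
  | mul w₁ w₂ ih₁ ih₂ =>
      rw [map_mul, map_mul, mul_assoc, ih₂, mul_smul_comm, ih₁, smul_smul, mul_comm]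
  | add w₁ w₂ ih₁ ih₂ =>
      rw [map_add, map_add, add_mul, ih₁, ih₂, add_smul]

lemma mul_ep (h2 : (2:k) ≠ 0) (a : A2 k) : a * ep k = chi k a • ep k :=
  mul_of_ep_fixed k a (ep k) (ep_ep k h2)

/-- `ε * a = ρ(a) • ε` for all `a`. -/
lemma e_mul (a : A2 k) : eBar k * a = rho k a • eBar k := by
  obtain ⟨w, rfl⟩ := RingQuot.mkAlgHom_surjective k (A2Rel k) a
  induction w using FreeAlgebra.induction with
  | grade0 r =>
      rw [AlgHom.commutes, AlgHom.commutes, Algebra.smul_def, ← Algebra.commutes]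
      simp
  | grade1 g =>
      cases g with
      | s =>
          show eBar k * sBar k = rho k (sBar k) • eBar k
          rw [rho_s, rel_es]
          exact (neg_one_smul k (eBar k)).symm
      | e =>
          show eBar k * eBar k = rho k (eBar k) • eBar k
          rw [rho_e, rel_ee, zero_smul]
  | mul w₁ w₂ ih₁ ih₂ =>
      rw [map_mul, map_mul, ← mul_assoc, ih₁, smul_mul_assoc, ih₂, smul_smul]
  | add w₁ w₂ ih₁ ih₂ =>
      rw [map_add, map_add, mul_add, ih₁, ih₂, add_smul]

/-- `e₋ * a = ρ(a) • e₋` for all `a`. -/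
lemma em_mul (h2 : (2:k) ≠ 0) (a : A2 k) : em k * a = rho k a • em k := by
  obtain ⟨w, rfl⟩ := RingQuot.mkAlgHom_surjective k (A2Rel k) a
  induction w using FreeAlgebra.induction with
  | grade0 r =>
      rw [AlgHom.commutes, AlgHom.commutes, Algebra.smul_def, ← Algebra.commutes]
      simp
  | grade1 g =>
      cases g with
      | s =>
          show em k * sBar k = rho k (sBar k) • em k
          have h1 : ep k + ep k = 1 + sBar k := by
            rw [← two_smul k, ep, smul_smul, mul_inv_cancel₀ h2, one_smul]
          rw [rho_s, em, sub_mul, one_mul, ep_s]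
          have e1 : (-1 : k) • (1 - ep k) = -(1 - ep k) := neg_one_smul k (1 - ep k)
          rw [e1, neg_sub, sub_eq_sub_iff_add_eq_add, h1, add_comm]
      | e =>
          show em k * eBar k = rho k (eBar k) • em k
          rw [rho_e, zero_smul, em, sub_mul, one_mul, ep_e k h2, sub_self]
  | mul w₁ w₂ ih₁ ih₂ =>
      rw [map_mul, map_mul, ← mul_assoc, ih₁, smul_mul_assoc, ih₂, smul_smul]
  | add w₁ w₂ ih₁ ih₂ =>
      rw [map_add, map_add, mul_add, ih₁, ih₂, add_smul]

end Chars

section Span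

variable (k : Type) [Field k]

lemma gens_mul_mem (x y : A2 k)
    (hx : x ∈ Submodule.span k {(1 : A2 k), sBar k, eBar k})
    (hy : y ∈ Submodule.span k {(1 : A2 k), sBar k, eBar k}) :
    x * y ∈ Submodule.span k {(1 : A2 k), sBar k, eBar k} := by
  induction hx using Submodule.span_induction with
  | mem z hz =>
      induction hy using Submodule.span_induction with
      | mem w hw =>
          simp only [Set.mem_insert_iff, Set.mem_singleton_iff] at hz hw
          rcases hz with rfl | rfl | rfl <;> rcases hw with rfl | rfl | rfl <;>
            simp only [one_mul, mul_one, rel_ss, rel_se, rel_es, rel_ee] <;>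
            first
              | exact Submodule.zero_mem _
              | exact Submodule.neg_mem _ (Submodule.subset_span (by simp))
              | exact Submodule.subset_span (by simp)
      | zero => rw [mul_zero]; exact Submodule.zero_mem _
      | add u v _ _ hu hv => rw [mul_add]; exact Submodule.add_mem _ hu hv
      | smul c u _ hu => rw [mul_smul_comm]; exact Submodule.smul_mem _ _ hu
  | zero => rw [zero_mul]; exact Submodule.zero_mem _
  | add u v _ _ hu hv => rw [add_mul]; exact Submodule.add_mem _ hu hv
  | smul c u _ hu => rw [smul_mul_assoc]; exact Submodule.smul_mem _ _ hu

lemma mem_span_gens (x : A2 k) :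
    x ∈ Submodule.span k {(1 : A2 k), sBar k, eBar k} := by
  obtain ⟨w, rfl⟩ := RingQuot.mkAlgHom_surjective k (A2Rel k) x
  induction w using FreeAlgebra.induction with
  | grade0 r =>
      have h1 : (RingQuot.mkAlgHom k (A2Rel k)) (algebraMap k _ r) = r • (1 : A2 k) := by
        rw [AlgHom.commutes, Algebra.smul_def, mul_one]
      rw [h1]
      exact Submodule.smul_mem _ _ (Submodule.subset_span (by simp))
  | grade1 g =>
      cases g
      · exact Submodule.subset_span (by simp [sBar])
      · exact Submodule.subset_span (by simp [eBar])
  | mul w₁ w₂ ih₁ ih₂ =>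
      rw [map_mul]
      exact gens_mul_mem k _ _ ih₁ ih₂
  | add w₁ w₂ ih₁ ih₂ =>
      rw [map_add]; exact Submodule.add_mem _ ih₁ ih₂

lemma ep_fixed_mem (h2 : (2:k) ≠ 0) (x : A2 k) (hx : ep k * x = x) :
    x ∈ Submodule.span k {ep k, eBar k} := by
  have hxT := mem_span_gens k x
  have main : ∀ y ∈ Submodule.span k {(1 : A2 k), sBar k, eBar k},
      ep k * y ∈ Submodule.span k {ep k, eBar k} := by
    intro y hy
    induction hy using Submodule.span_induction with
    | mem z hz =>
        simp only [Set.mem_insert_iff, Set.mem_singleton_iff] at hz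
        rcases hz with rfl | rfl | rfl
        · rw [mul_one]; exact Submodule.subset_span (by simp)
        · rw [ep_s]; exact Submodule.subset_span (by simp)
        · rw [ep_e k h2]; exact Submodule.subset_span (by simp)
    | zero => rw [mul_zero]; exact Submodule.zero_mem _
    | add u v _ _ hu hv => rw [mul_add]; exact Submodule.add_mem _ hu hv
    | smul c u _ hu => rw [mul_smul_comm]; exact Submodule.smul_mem _ _ hu
  rw [← hx]
  exact main x hxT

end Span

/-- If `char k ≠ 2`, the periplectic Brauer algebra `A₂` over `k` is hereditary: every
left ideal of `A₂` (i.e. every submodule of the left regular module) is projective as a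
left `A₂`-module. -/
theorem statement7 (k : Type) [Field k] (h : ringChar k ≠ 2)
    (I : Submodule (A2 k) (A2 k)) : Module.Projective (A2 k) I := by
  have h2 : (2:k) ≠ 0 := Ring.two_ne_zero h
  by_cases hIP : ∀ x ∈ I, ep k * x = x
  · -- Case 1 : `I` is contained in the `χ`-isotypic part
    classical
    let b := Module.Basis.ofVectorSpace k I
    set ι := Module.Basis.ofVectorSpaceIndex k I with hι
    have hcoe : ∀ (a : A2 k) (x : I), (↑(a • x) : A2 k) = chi k a • (x : A2 k) := by
      intro a x
      have : (↑(a • x) : A2 k) = a * (x : A2 k) := rfl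
      rw [this, mul_of_ep_fixed k a x (hIP x x.2)]
    have hsmul_eq : ∀ (a : A2 k) (x : I), a • x = chi k a • x := by
      intro a x
      apply Subtype.ext
      rw [hcoe]
      exact (Submodule.coe_smul_of_tower (chi k a) x).symm
    let f : k → A2 k := fun c => c • ep k
    have hf0 : f 0 = 0 := by simp [f]
    let σ : I →ₗ[A2 k] (ι →₀ A2 k) :=
      { toFun := fun x => (b.repr x).mapRange f hf0
        map_add' := by
          intro x y
          ext i
          simp only [Finsupp.mapRange_apply, map_add, Finsupp.add_apply, f]
          rw [add_smul]
        map_smul' := by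
          intro a x
          ext i
          simp only [Finsupp.mapRange_apply, RingHom.id_apply, Finsupp.smul_apply]
          rw [hsmul_eq a x, map_smul, Finsupp.smul_apply, smul_eq_mul]
          show (chi k a * (b.repr x) i) • ep k = a • (((b.repr x) i) • ep k)
          rw [smul_eq_mul (α := A2 k), mul_smul_comm, mul_ep k h2 a, smul_smul, mul_comm] }
    let p : (ι →₀ A2 k) →ₗ[A2 k] I := Finsupp.linearCombination (A2 k) (fun i : ι => b i)
    refine Module.Projective.of_split σ p ?_
    ext x
    simp only [LinearMap.coe_comp, Function.comp_apply, LinearMap.id_coe, id_eq,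
      LinearMap.coe_mk, AddHom.coe_mk, Finsupp.linearCombination_apply, p, σ]
    rw [Finsupp.sum_mapRange_index (by intro i; rw [zero_smul])]
    have hterm : ∀ i ∈ (b.repr x).support,
        (f ((b.repr x) i)) • (b i) = ((b.repr x) i) • (b i) := by
      intro i _
      show (((b.repr x) i) • ep k) • (b i) = ((b.repr x) i) • (b i)
      rw [smul_assoc]
      congr 1
      apply Subtype.ext
      show ep k * ↑(b i) = ↑(b i)
      exact hIP _ (b i).2
    have hs : ((b.repr x).sum fun i c => f c • b i) = ((b.repr x).sum fun i c => c • b i) :=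
      Finsupp.sum_congr hterm
    rw [hs]
    have hr := b.linearCombination_repr x
    rw [Finsupp.linearCombination_apply] at hr
    exact congrArg Subtype.val hr
  · -- Case 2 : `I` contains `e₋` and `ε`
    push_neg at hIP
    obtain ⟨y, hyI, hy⟩ := hIP
    have hry : rho k y ≠ 0 := by
      intro h0
      apply hy
      have h3 := em_mul k h2 y
      rw [h0, zero_smul] at h3
      have hd : ep k = 1 - em k := by rw [em, sub_sub_cancel]
      rw [hd, sub_mul, one_mul, h3, sub_zero]
    have hsc : ∀ (c : k) (z : A2 k), z ∈ I → c • z ∈ I := by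
      intro c z hz
      have := I.smul_mem (algebraMap k (A2 k) c) hz
      rwa [algebraMap_smul] at this
    have heI : eBar k ∈ I := by
      have h4 : eBar k * y ∈ I := I.smul_mem (eBar k) hyI
      rw [e_mul k y] at h4
      have h5 := hsc (rho k y)⁻¹ _ h4
      rwa [smul_smul, inv_mul_cancel₀ hry, one_smul] at h5
    have hemI : em k ∈ I := by
      have h4 : em k * y ∈ I := I.smul_mem (em k) hyI
      rw [em_mul k h2 y] at h4
      have h5 := hsc (rho k y)⁻¹ _ h4
      rwa [smul_smul, inv_mul_cancel₀ hry, one_smul] at h5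
    by_cases hepI : ep k ∈ I
    · have hI : I = ⊤ := by
        rw [Submodule.eq_top_iff']
        intro x
        have h1 : (1 : A2 k) ∈ I := by
          have := I.add_mem hepI hemI
          rwa [em, add_sub_cancel] at this
        have := I.smul_mem x h1
        rwa [smul_eq_mul, mul_one] at this
      rw [hI]
      exact Module.Projective.of_equiv (Submodule.topEquiv (R := A2 k) (M := A2 k)).symm
    · have key : ∀ x ∈ I, x * em k = x := by
        intro x hx
        have hpx : ep k * x ∈ I := I.smul_mem (ep k) hx
        have hfix : ep k * (ep k * x) = ep k * x := by rw [← mul_assoc, ep_ep k h2]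
        have hmem := ep_fixed_mem k h2 (ep k * x) hfix
        rw [Submodule.mem_span_pair] at hmem
        obtain ⟨a, c, hac⟩ := hmem
        have haI : a • ep k ∈ I := by
          have hrw : a • ep k = ep k * x - c • eBar k := by
            rw [← hac, add_sub_cancel_right]
          rw [hrw]
          exact I.sub_mem hpx (hsc c _ heI)
        have ha0 : a = 0 := by
          by_contra ha
          apply hepI
          have := hsc a⁻¹ _ haI
          rwa [smul_smul, inv_mul_cancel₀ ha, one_smul] at this
        rw [ha0, zero_smul, zero_add] at hac
        have hx2 : x = c • eBar k + em k * x := by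
          calc x = ep k * x + (x - ep k * x) := by rw [add_sub_cancel]
            _ = c • eBar k + em k * x := by rw [hac, em, sub_mul, one_mul]
        have h6 : em k * x * em k = em k * x := by
          rw [em_mul k h2 x, smul_mul_assoc, em_em k h2]
        calc x * em k = (c • eBar k + em k * x) * em k := by rw [← hx2]
          _ = c • (eBar k * em k) + em k * x * em k := by rw [add_mul, smul_mul_assoc]
          _ = c • eBar k + em k * x := by rw [e_em, h6]
          _ = x := hx2.symm
      refine Module.Projective.of_split I.subtype
        { toFun := fun a => ⟨a * em k, I.smul_mem a hemI⟩
          map_add' := by intro a b; apply Subtype.ext; show (a + b) * em k = a * em k + b * em k; rw [add_mul]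
          map_smul' := by
            intro a x
            apply Subtype.ext
            show (a • x) * em k = a • (x * em k)
            rw [smul_eq_mul, smul_eq_mul, mul_assoc] } ?_
      ext x
      show (↑x : A2 k) * em k = ↑x
      exact key x x.2

end PeriplecticPaper
end

section
/- Let k be a field with char k ≠ 2. The periplectic Brauer algebra A₂ over k is not commutative; in particular the images of s and ε satisfy s·ε = ε and ε·s = −ε with ε ≠ 0, so s·ε ≠ ε·s. -/
namespace PeriplecticPaper

open FreeAlgebra

/-- A concrete 2×2 matrix representation of the generators. -/
noncomputable def rep (k : Type) [Field k] : PBGen → Matrix (Fin 2) (Fin 2) k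
  | PBGen.s => !![1, 0; 0, -1]
  | PBGen.e => !![0, 1; 0, 0]

/-- The induced algebra map on the free algebra. -/
noncomputable def repHom (k : Type) [Field k] :
    FreeAlgebra k PBGen →ₐ[k] Matrix (Fin 2) (Fin 2) k :=
  FreeAlgebra.lift k (rep k)

lemma repHom_rel (k : Type) [Field k] {a b : FreeAlgebra k PBGen} (hr : A2Rel k a b) :
    repHom k a = repHom k b := by
  cases hr <;>
    simp only [repHom, map_mul, map_one, map_zero, map_neg, FreeAlgebra.lift_ι_apply, rep] <;>
    ext i j <;> fin_cases i <;> fin_cases j <;>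
    simp [Matrix.mul_apply, Fin.sum_univ_two]

/-- The representation descends to `A₂`. -/
noncomputable def repQuot (k : Type) [Field k] :
    A2 k →ₐ[k] Matrix (Fin 2) (Fin 2) k :=
  RingQuot.liftAlgHom k ⟨repHom k, fun _ _ hr => repHom_rel k hr⟩

lemma repQuot_eBar (k : Type) [Field k] :
    repQuot k (eBar k) = !![0, 1; 0, 0] := by
  simp [repQuot, eBar, RingQuot.liftAlgHom_mkAlgHom_apply, repHom, rep]

/-- If `char k ≠ 2`, the periplectic Brauer algebra `A₂` over `k` is not commutative:
the images of `s` and `ε` satisfy `s·ε = ε` and `ε·s = -ε` with `ε ≠ 0`, so that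
`s·ε ≠ ε·s`. -/
theorem statement10 (k : Type) [Field k] (h : ringChar k ≠ 2) :
    sBar k * eBar k = eBar k ∧
    eBar k * sBar k = -(eBar k) ∧
    eBar k ≠ 0 ∧
    sBar k * eBar k ≠ eBar k * sBar k := by
  have hse : sBar k * eBar k = eBar k := by
    have := RingQuot.mkAlgHom_rel k (A2Rel.se (k := k))
    rw [map_mul] at this
    exact this
  have hes : eBar k * sBar k = -(eBar k) := by
    have := RingQuot.mkAlgHom_rel k (A2Rel.es (k := k))
    rw [map_mul, map_neg] at this
    exact this
  have hne : eBar k ≠ 0 := by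
    intro h0
    have := repQuot_eBar k
    rw [h0, map_zero] at this
    have h01 : (0 : Matrix (Fin 2) (Fin 2) k) 0 1 = (1 : k) := by
      rw [this]; simp
    simp at h01
  refine ⟨hse, hes, hne, ?_⟩
  intro heq
  rw [hse, hes] at heq
  have h2 : (2 : k) ≠ 0 := by
    intro h2
    exact h (CharP.ringChar_of_prime_eq_zero Nat.prime_two (by exact_mod_cast h2))
  have : (2 : k) • eBar k = 0 := by
    rw [two_smul]
    nth_rewrite 2 [heq]
    exact add_neg_cancel _
  rcases smul_eq_zero.mp this with h' | h'
  · exact h2 h'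
  · exact hne h'

end PeriplecticPaper
end
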